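/- Let F : ℝ^m → ℝ^m be C¹ with F(û) = 0 and DF(û) invertible (hyperbolic steady state in the sense that 0 is not an eigenvalue). Suppose φ^{Δt} : ℝ^m → ℝ^m is a family of C¹ maps with φ^{Δt}(u) = u + Δt F(u) + Δt R(u, Δt) where ‖R(u,Δt)‖ ≤ K Δt and ‖R(u,Δt) - R(v,Δt)‖ ≤ K Δt ‖u - v‖ uniformly for u, v in a fixed ball around û (first-order consistency with Lipschitz remainder). Then there exist Δt₀ > 0 and C > 0 such that for each 0 < Δt ≤ Δt₀, φ^{Δt} has a fixed point Û(Δt) that is unique in the ball B(û, C Δt). -/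

import Mathlib

/-!
For `Δt > 0` the fixed points of `φ Δt` are the zeros of `G u = F u + R u Δt`. With `L = DF(û)`,
the chord map `u ↦ u - L⁻¹ (G u)` is a contraction near `û`: strict differentiability makes
`F - L` Lipschitz with a small constant on a ball around `û`, and `R (·) Δt` is `KΔt`-Lipschitz.
Since `F û = 0`, the chord map moves `û` by at most `‖L⁻¹‖ K Δt`, so for small `Δt` it maps the
ball `B(û, CΔt)` into itself, and Banach's fixed point theorem gives a unique zero of `G` there.
-/

open Metric Set Function NNReal

theorem LipschitzOnWith.existsUnique_fixedPt_closedBall {α : Type*} [MetricSpace α]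
    [CompleteSpace α] {f : α → α} {x : α} {ρ : ℝ} {k : ℝ≥0} (hk : k < 1)
    (hf : LipschitzOnWith k f (closedBall x ρ)) (hx : dist (f x) x ≤ (1 - k) * ρ) :
    ∃! y, y ∈ closedBall x ρ ∧ f y = y := by
  have hk' : (k : ℝ) < 1 := hk
  have hρ : 0 ≤ ρ := nonneg_of_mul_nonneg_right (dist_nonneg.trans hx) (by linarith)
  have hmaps : MapsTo f (closedBall x ρ) (closedBall x ρ) := fun y hy => by
    rw [mem_closedBall] at hy ⊢
    calc dist (f y) x ≤ dist (f y) (f x) + dist (f x) x := dist_triangle _ _ _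
      _ ≤ k * ρ + (1 - k) * ρ := by
        gcongr
        exact (hf.dist_le_mul y (mem_closedBall.2 hy) x (mem_closedBall_self hρ)).trans
          (by gcongr)
      _ = ρ := by ring
  have hcontr : ContractingWith k (hmaps.restrict f _ _) := ⟨hk, hf.mapsToRestrict hmaps⟩
  obtain ⟨y, hy, hfy, -⟩ := hcontr.exists_fixedPoint' isClosed_closedBall.isComplete hmaps
    (mem_closedBall_self hρ) (edist_ne_top _ _)
  refine ⟨y, ⟨hy, hfy⟩, fun z ⟨hz, hfz⟩ => ?_⟩
  exact congrArg Subtype.val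
    (hcontr.fixedPoint_unique' (x := ⟨z, hz⟩) (y := ⟨y, hy⟩) (Subtype.ext hfz) (Subtype.ext hfy))

section

variable {𝕜 E F : Type*} [NontriviallyNormedField 𝕜] [NormedAddCommGroup E] [NormedSpace 𝕜 E]
  [NormedAddCommGroup F] [NormedSpace 𝕜 F] {G R : E → F} {s : Set E} {c K : ℝ≥0}

theorem HasStrictFDerivAt.exists_approximatesLinearOn_closedBall {f' : E →L[𝕜] F} {a : E}
    (hG : HasStrictFDerivAt G f' a) (hc : 0 < c) {r : ℝ} (hr : 0 < r) :
    ∃ ρ > 0, ρ ≤ r ∧ ApproximatesLinearOn G f' (closedBall a ρ) c := by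
  obtain ⟨s, hs, hGs⟩ := hG.approximates_deriv_on_nhds (Or.inr hc)
  obtain ⟨ε, hε, hεs⟩ := nhds_basis_closedBall.mem_iff.1 hs
  exact ⟨min ε r, lt_min hε hr, min_le_right _ _,
    hGs.mono_set ((closedBall_subset_closedBall (min_le_left _ _)).trans hεs)⟩

theorem ApproximatesLinearOn.add_lipschitzOnWith {L : E →L[𝕜] F}
    (hG : ApproximatesLinearOn G L s c) (hR : LipschitzOnWith K R s) :
    ApproximatesLinearOn (fun u => G u + R u) L s (c + K) := by
  rw [approximatesLinearOn_iff_lipschitzOnWith] at hG ⊢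
  have : (fun u => G u + R u) - ⇑L = fun u => (G - ⇑L) u + R u := by
    funext u
    simp only [Pi.sub_apply]
    abel
  exact this ▸ hG.add hR

theorem ApproximatesLinearOn.lipschitzOnWith_sub_symm {L : E ≃L[𝕜] F}
    (hG : ApproximatesLinearOn G (L : E →L[𝕜] F) s c) :
    LipschitzOnWith (‖(L.symm : F →L[𝕜] E)‖₊ * c) (fun u => u - L.symm (G u)) s := by
  refine LipschitzOnWith.of_dist_le_mul fun u hu v hv => ?_
  have : u - L.symm (G u) - (v - L.symm (G v)) = -L.symm (G u - G v - L (u - v)) := by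
    simp only [map_sub, ContinuousLinearEquiv.symm_apply_apply]
    abel
  rw [dist_eq_norm, dist_eq_norm, this, norm_neg, NNReal.coe_mul, mul_assoc]
  exact (L.symm : F →L[𝕜] E).le_opNorm_of_le (hG u hu v hv)

theorem ApproximatesLinearOn.existsUnique_zero_closedBall [CompleteSpace E] {L : E ≃L[𝕜] F}
    {a : E} {ρ : ℝ} (hG : ApproximatesLinearOn G (L : E →L[𝕜] F) (closedBall a ρ) c)
    (hc : ‖(L.symm : F →L[𝕜] E)‖₊ * c < 1)
    (ha : ‖L.symm (G a)‖ ≤ (1 - ‖(L.symm : F →L[𝕜] E)‖ * c) * ρ) :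
    ∃! u, u ∈ closedBall a ρ ∧ G u = 0 := by
  have hfix : ∀ u, u - L.symm (G u) = u ↔ G u = 0 := by simp
  simpa only [hfix] using hG.lipschitzOnWith_sub_symm.existsUnique_fixedPt_closedBall hc
    (by simpa [dist_eq_norm] using ha)

theorem ApproximatesLinearOn.existsUnique_zero_add_closedBall [CompleteSpace E] {L : E ≃L[𝕜] F}
    {a : E} {ρ δ : ℝ} (hG : ApproximatesLinearOn G (L : E →L[𝕜] F) (closedBall a ρ) c)
    (hGa : G a = 0) (hR : LipschitzOnWith K R (closedBall a ρ)) (hRa : ‖R a‖ ≤ δ)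
    (hcK : ‖(L.symm : F →L[𝕜] E)‖₊ * (c + K) ≤ 2⁻¹)
    (hδ : 2 * ‖(L.symm : F →L[𝕜] E)‖ * δ ≤ ρ) :
    ∃! u, u ∈ closedBall a ρ ∧ G u + R u = 0 := by
  refine (hG.add_lipschitzOnWith hR).existsUnique_zero_closedBall
    (hcK.trans_lt (by norm_num)) ?_
  have hcK' : ‖(L.symm : F →L[𝕜] E)‖ * ((c + K : ℝ≥0) : ℝ) ≤ 2⁻¹ := by exact_mod_cast hcK
  have hδ₀ : 0 ≤ ‖(L.symm : F →L[𝕜] E)‖ * δ := by positivity [(norm_nonneg _).trans hRa]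
  calc ‖L.symm (G a + R a)‖ = ‖L.symm (R a)‖ := by rw [hGa, zero_add]
    _ ≤ ‖(L.symm : F →L[𝕜] E)‖ * δ := (L.symm : F →L[𝕜] E).le_opNorm_of_le hRa
    _ ≤ (1 - ‖(L.symm : F →L[𝕜] E)‖ * ((c + K : ℝ≥0) : ℝ)) * ρ := by
        nlinarith [mul_nonneg (sub_nonneg.2 hcK') (hδ₀.trans (by linarith) : 0 ≤ ρ)]

end

theorem add_smul_add_smul_eq_self_iff {𝕜 E : Type*} [Field 𝕜] [AddCommGroup E] [Module 𝕜 E]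
    {t : 𝕜} (ht : t ≠ 0) (u a b : E) : u + t • a + t • b = u ↔ a + b = 0 := by
  rw [add_assoc, add_eq_left, ← smul_add, smul_eq_zero, or_iff_right ht]

theorem stmt17_general (m : ℕ) (F : (Fin m → ℝ) → (Fin m → ℝ)) (hF : ContDiff ℝ 1 F)
    (uhat : Fin m → ℝ) (hFu : F uhat = 0)
    (hinv : Function.Bijective (fderiv ℝ F uhat))
    (φ : ℝ → (Fin m → ℝ) → (Fin m → ℝ))
    (R : (Fin m → ℝ) → ℝ → (Fin m → ℝ)) (K r : ℝ) (hK : 0 < K) (hr : 0 < r)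
    (hform : ∀ Δt > (0 : ℝ), ∀ u, φ Δt u = u + Δt • F u + Δt • R u Δt)
    (hRb : ∀ Δt > (0 : ℝ), ∀ u ∈ Metric.closedBall uhat r, ‖R u Δt‖ ≤ K * Δt)
    (hRL : ∀ Δt > (0 : ℝ), ∀ u ∈ Metric.closedBall uhat r,
      ∀ v ∈ Metric.closedBall uhat r, ‖R u Δt - R v Δt‖ ≤ K * Δt * ‖u - v‖) :
    ∃ Δt₀ > (0 : ℝ), ∃ C > (0 : ℝ), ∀ Δt : ℝ, 0 < Δt → Δt ≤ Δt₀ →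
      ∃! U : Fin m → ℝ, U ∈ Metric.closedBall uhat (C * Δt) ∧ φ Δt U = U := by
  let L : (Fin m → ℝ) ≃L[ℝ] (Fin m → ℝ) :=
    (LinearEquiv.ofBijective (fderiv ℝ F uhat : (Fin m → ℝ) →ₗ[ℝ] (Fin m → ℝ)) hinv)
      |>.toContinuousLinearEquiv
  set N := ‖(L.symm : (Fin m → ℝ) →L[ℝ] (Fin m → ℝ))‖₊
  obtain ⟨ρ, hρ, hρr, hFL⟩ : ∃ ρ > 0, ρ ≤ r ∧ ApproximatesLinearOn F
      (L : (Fin m → ℝ) →L[ℝ] (Fin m → ℝ)) (closedBall uhat ρ) (4 * (N + 1))⁻¹ :=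
    (hF.hasStrictFDerivAt one_ne_zero).exists_approximatesLinearOn_closedBall (by positivity) hr
  set C := 2 * (N + 1) * K
  refine ⟨min (ρ / C) (1 / (4 * (N + 1) * K)), by positivity, C, by positivity,
    fun Δt hΔt hΔt₀ => ?_⟩
  have hCρ : C * Δt ≤ ρ := (le_div_iff₀' (by positivity)).1 (hΔt₀.trans (min_le_left _ _))
  have hKΔt : 4 * (N + 1) * K * Δt ≤ 1 :=
    (le_div_iff₀' (by positivity)).1 (hΔt₀.trans (min_le_right _ _))
  have hk : N * ((4 * (N + 1))⁻¹ + (K * Δt).toNNReal) ≤ 2⁻¹ := by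
    have hN : (N : ℝ) / (4 * (N + 1)) ≤ 1 / 4 := by
      rw [div_le_iff₀ (by positivity)]
      linarith
    rw [← NNReal.coe_le_coe]
    push_cast
    rw [Real.coe_toNNReal _ (by positivity), mul_add, ← div_eq_mul_inv]
    nlinarith [N.coe_nonneg]
  have hR : LipschitzOnWith (K * Δt).toNNReal (R · Δt) (closedBall uhat r) :=
    LipschitzOnWith.of_dist_le' fun u hu v hv => by
      simpa only [dist_eq_norm] using hRL Δt hΔt u hu v hv
  simp_rw [hform Δt hΔt, add_smul_add_smul_eq_self_iff hΔt.ne']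
  refine (hFL.mono_set (closedBall_subset_closedBall hCρ)).existsUnique_zero_add_closedBall hFu
    (hR.mono (closedBall_subset_closedBall (hCρ.trans hρr)))
    (hRb Δt hΔt uhat (mem_closedBall_self hr.le)) hk ?_
  show 2 * (N : ℝ) * (K * Δt) ≤ C * Δt
  nlinarith [mul_pos hK hΔt]

theorem stmt17 (m : ℕ) (F : (Fin m → ℝ) → (Fin m → ℝ)) (hF : ContDiff ℝ 1 F)
    (uhat : Fin m → ℝ) (hFu : F uhat = 0)
    (hinv : Function.Bijective (fderiv ℝ F uhat))
    (φ : ℝ → (Fin m → ℝ) → (Fin m → ℝ)) (hφC1 : ∀ Δt, ContDiff ℝ 1 (φ Δt))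
    (R : (Fin m → ℝ) → ℝ → (Fin m → ℝ)) (K r : ℝ) (hK : 0 < K) (hr : 0 < r)
    (hform : ∀ Δt > (0 : ℝ), ∀ u, φ Δt u = u + Δt • F u + Δt • R u Δt)
    (hRb : ∀ Δt > (0 : ℝ), ∀ u ∈ Metric.closedBall uhat r, ‖R u Δt‖ ≤ K * Δt)
    (hRL : ∀ Δt > (0 : ℝ), ∀ u ∈ Metric.closedBall uhat r,
      ∀ v ∈ Metric.closedBall uhat r, ‖R u Δt - R v Δt‖ ≤ K * Δt * ‖u - v‖) :
    ∃ Δt₀ > (0 : ℝ), ∃ C > (0 : ℝ), ∀ Δt : ℝ, 0 < Δt → Δt ≤ Δt₀ →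
      ∃! U : Fin m → ℝ, U ∈ Metric.closedBall uhat (C * Δt) ∧ φ Δt U = U :=
  stmt17_general m F hF uhat hFu hinv φ R K r hK hr hform hRb hRL
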